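/- arXiv:0910.4624 — 3 statements merged into one kernel-verified Lean document; each statement's English description precedes it below -/
import Mathlib

section
/- Let π = {W₁,...,Wᵣ} be a partition of {1,...,n} and let ρ(π) be a partition of {1,...,2n} such that each block of π is associated with at least one block of ρ(π), and ρ(π)∨[0,1]ₙ has r connected components. Then |π| ≤ |ρ(π)| − r + 1. -/
/-- The index map `k ↦ ⌊(k+1)/2⌋ mod n` assigning to each of the `2n` matrix-entry
positions the index of the corresponding column-index `j`. -/
def idxMap (n : ℕ) [NeZero n] (k : Fin (2 * n)) : Fin n :=
  ⟨((k.val + 1) / 2) % n, Nat.mod_lt _ (Nat.pos_of_ne_zero (NeZero.ne n))⟩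

/-- The map defining the interval partition `[0,1]ₙ = {{1,2},{3,4},...}` of `{1,...,2n}`
(0-indexed: pairs `{0,1},{2,3},...`). -/
def pairMap (n : ℕ) (k : Fin (2 * n)) : Fin n :=
  ⟨k.val / 2, by have := k.isLt; omega⟩

/-- The partition `ρ(π)` of `{1,...,2n}` generated by `k ∼ l` iff
`⌊k/2⌋+1 ∼_π ⌊l/2⌋+1` and `k ∼_{σ₁} l`, where `π = ker j`. -/
def rhoPi (n L : ℕ) [NeZero n] (j : Fin n → Fin L) (σ1 : Setoid (Fin (2 * n))) :
    Setoid (Fin (2 * n)) :=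
  Setoid.comap (idxMap n) (Setoid.ker j) ⊓ σ1


open Function

variable {Y : Type*}

/-- smallest setoid relating x and y -/
def pairS (x y : Y) : Setoid Y :=
  ⟨fun z w => z = w ∨ (z = x ∧ w = y) ∨ (z = y ∧ w = x), by
    constructor
    · intro z; exact Or.inl rfl
    · intro z w h; tauto
    · intro a b c h1 h2; rcases h1 with h|⟨h,h'⟩|⟨h,h'⟩ <;> rcases h2 with g|⟨g,g'⟩|⟨g,g'⟩ <;>
        subst_vars <;> tauto⟩

def mergeS (s : Setoid Y) (x y : Y) : Setoid Y :=
  ⟨fun z w => s z w ∨ (s z x ∧ s y w) ∨ (s z y ∧ s x w), by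
    constructor
    · intro z; exact Or.inl (s.refl z)
    · intro z w h
      rcases h with h|⟨h1,h2⟩|⟨h1,h2⟩
      · exact Or.inl (s.symm h)
      · exact Or.inr (Or.inr ⟨s.symm h2, s.symm h1⟩)
      · exact Or.inr (Or.inl ⟨s.symm h2, s.symm h1⟩)
    · intro a b c h1 h2
      rcases h1 with h|⟨p1,p2⟩|⟨p1,p2⟩ <;> rcases h2 with g|⟨g1,g2⟩|⟨g1,g2⟩
      · exact Or.inl (s.trans h g)
      · exact Or.inr (Or.inl ⟨s.trans h g1, g2⟩)
      · exact Or.inr (Or.inr ⟨s.trans h g1, g2⟩)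
      · exact Or.inr (Or.inl ⟨p1, s.trans p2 g⟩)
      · exact Or.inl (s.trans p1 (s.trans (s.symm g1) (s.trans (s.symm p2) g2)))
      · exact Or.inl (s.trans p1 g2)
      · exact Or.inr (Or.inr ⟨p1, s.trans p2 g⟩)
      · exact Or.inl (s.trans p1 g2)
      · exact Or.inl (s.trans p1 (s.trans (s.symm g1) (s.trans (s.symm p2) g2)))⟩

theorem mergeS_eq (s : Setoid Y) (x y : Y) : mergeS s x y = s ⊔ pairS x y := by
  apply le_antisymm
  · intro a b h
    rcases h with h|⟨h1,h2⟩|⟨h1,h2⟩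
    · exact le_sup_left (α := Setoid Y) h
    · have hx : (s ⊔ pairS x y) a x := le_sup_left (α := Setoid Y) h1
      have hxy : (s ⊔ pairS x y) x y := le_sup_right (α := Setoid Y) (Or.inr (Or.inl ⟨rfl, rfl⟩))
      have hy : (s ⊔ pairS x y) y b := le_sup_left (α := Setoid Y) h2
      exact (s ⊔ pairS x y).trans hx ((s ⊔ pairS x y).trans hxy hy)
    · have hx : (s ⊔ pairS x y) a y := le_sup_left (α := Setoid Y) h1
      have hxy : (s ⊔ pairS x y) y x := le_sup_right (α := Setoid Y) (Or.inr (Or.inr ⟨rfl, rfl⟩))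
      have hy : (s ⊔ pairS x y) x b := le_sup_left (α := Setoid Y) h2
      exact (s ⊔ pairS x y).trans hx ((s ⊔ pairS x y).trans hxy hy)
  · apply sup_le
    · intro a b h; exact Or.inl h
    · intro a b h
      rcases h with rfl|⟨rfl,rfl⟩|⟨rfl,rfl⟩
      · exact Or.inl (s.refl a)
      · exact Or.inr (Or.inl ⟨s.refl _, s.refl _⟩)
      · exact Or.inr (Or.inr ⟨s.refl _, s.refl _⟩)

theorem mk''_surj {s : Setoid Y} (q : Quotient s) : ∃ z, Quotient.mk'' z = q :=
  Quotient.inductionOn' q fun z => ⟨z, rfl⟩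

theorem quot_map_surj {u t : Setoid Y} (h : u ≤ t) :
    Function.Surjective (Quotient.map' (s₁ := u) (s₂ := t) id fun _ _ hab => h hab) := fun q =>
  Quotient.inductionOn' q fun a => ⟨Quotient.mk'' a, rfl⟩

theorem card_quot_le_of_le [Finite Y] {u t : Setoid Y} (h : u ≤ t) :
    Nat.card (Quotient t) ≤ Nat.card (Quotient u) :=
  Nat.card_le_card_of_surjective _ (quot_map_surj h)

theorem card_quot_merge [Finite Y] (s : Setoid Y) (x y : Y) :
    Nat.card (Quotient s) ≤ Nat.card (Quotient (s ⊔ pairS x y)) + 1 := by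
  classical
  rw [← mergeS_eq, ← Finite.card_option]
  have hle : s ≤ mergeS s x y := fun a b h => Or.inl h
  let g : Quotient s → Quotient (mergeS s x y) :=
    Quotient.map' id fun _ _ h => hle h
  let F : Quotient s → Option (Quotient (mergeS s x y)) := fun a =>
    if a = Quotient.mk'' y then none else some (g a)
  have : Finite (Quotient (mergeS s x y)) := Quotient.finite _
  have := Fintype.ofFinite (Quotient (mergeS s x y))
  apply Nat.card_le_card_of_injective F
  intro a b hab
  simp only [F] at hab
  by_cases ha : a = Quotient.mk'' y <;> by_cases hb : b = Quotient.mk'' y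
  · exact ha.trans hb.symm
  · rw [if_pos ha, if_neg hb] at hab; exact absurd hab (by simp)
  · rw [if_neg ha, if_pos hb] at hab; exact absurd hab (by simp)
  · rw [if_neg ha, if_neg hb, Option.some_inj] at hab
    obtain ⟨z, rfl⟩ := mk''_surj a
    obtain ⟨w, rfl⟩ := mk''_surj b
    simp only [g, Quotient.map'_mk'', id] at hab
    have h' : (mergeS s x y) z w := Quotient.eq''.mp hab
    rcases h' with h|⟨h1,h2⟩|⟨h1,h2⟩
    · exact Quotient.sound' h
    · exact absurd (Quotient.sound' (s.symm h2)) hb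
    · exact absurd (Quotient.sound' h1) ha

theorem card_quot_lt [Finite Y] {u u' : Setoid Y} (h : u ≤ u') {x y : Y}
    (hxy : ¬ u x y) (hxy' : u' x y) :
    Nat.card (Quotient u') < Nat.card (Quotient u) := by
  have i1 := Fintype.ofFinite (Quotient u)
  have i2 := Fintype.ofFinite (Quotient u')
  rw [Nat.card_eq_fintype_card, Nat.card_eq_fintype_card]
  apply Fintype.card_lt_of_surjective_not_injective _ (quot_map_surj h)
  intro hinj
  have : Quotient.mk'' (s₁ := u) x = Quotient.mk'' y := by
    apply hinj
    simp only [Quotient.map'_mk'', id]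
    exact Quotient.sound' hxy'
  exact hxy (Quotient.eq''.mp this)

theorem key_aux [Finite Y] [Nonempty Y] :
    ∀ (N : ℕ) (u s t : Setoid Y), Nat.card (Quotient u) ≤ N → u ≤ s → u ≤ t → s ⊔ t = ⊤ →
      Nat.card (Quotient s) + Nat.card (Quotient t) ≤ Nat.card (Quotient u) + 1 := by
  intro N
  induction N with
  | zero =>
    intro u s t hN hus hut hst
    have hne : Nonempty (Quotient u) := ⟨Quotient.mk'' (Classical.arbitrary Y)⟩
    have : 0 < Nat.card (Quotient u) := Nat.card_pos
    omega
  | succ N ih =>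
    intro u s t hN hus hut hst
    by_cases hs : s = ⊤
    · subst hs
      have h1 : Nat.card (Quotient (⊤ : Setoid Y)) = 1 := by
        rw [Nat.card_eq_one_iff_unique]
        refine ⟨⟨fun a b => ?_⟩, ⟨Quotient.mk'' (Classical.arbitrary Y)⟩⟩
        obtain ⟨z, rfl⟩ := mk''_surj a
        obtain ⟨w, rfl⟩ := mk''_surj b
        exact Quotient.sound' trivial
      rw [h1]
      have := card_quot_le_of_le hut
      omega
    · have hex : ∃ x y, t x y ∧ ¬ s x y := by
        by_contra hc
        push_neg at hc
        have hts : t ≤ s := fun a b hab => hc a b hab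
        apply hs
        rw [← hst, sup_eq_left.mpr hts]
      obtain ⟨x, y, htxy, hsxy⟩ := hex
      have huxy : ¬ u x y := fun h => hsxy (hus h)
      have hpt : pairS x y ≤ t := by
        intro a b hab
        rcases hab with rfl|⟨rfl,rfl⟩|⟨rfl,rfl⟩
        · exact t.refl a
        · exact htxy
        · exact t.symm htxy
      have hu' : u ⊔ pairS x y ≤ s ⊔ pairS x y := sup_le_sup_right hus _
      have hu't : u ⊔ pairS x y ≤ t := sup_le hut hpt
      have hs't : (s ⊔ pairS x y) ⊔ t = ⊤ := by
        have h1 : s ⊔ t ≤ (s ⊔ pairS x y) ⊔ t := sup_le_sup_right le_sup_left t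
        rw [hst] at h1
        exact eq_top_iff.mpr h1
      have hlt : Nat.card (Quotient (u ⊔ pairS x y)) < Nat.card (Quotient u) :=
        card_quot_lt le_sup_left huxy
          (le_sup_right (a := u) (Or.inr (Or.inl ⟨rfl, rfl⟩)))
      have hIH := ih (u ⊔ pairS x y) (s ⊔ pairS x y) t (by omega) hu' hu't hs't
      have hmerge := card_quot_merge s x y
      omega

theorem key [Finite Y] [Nonempty Y] (u s t : Setoid Y) (hus : u ≤ s) (hut : u ≤ t)
    (hst : s ⊔ t = ⊤) :
    Nat.card (Quotient s) + Nat.card (Quotient t) ≤ Nat.card (Quotient u) + 1 :=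
  key_aux _ u s t le_rfl hus hut hst

theorem idxMap_surjective (n : ℕ) [NeZero n] : Function.Surjective (idxMap n) := by
  have hn : 0 < n := Nat.pos_of_ne_zero (NeZero.ne n)
  intro i
  by_cases h : i.val = 0
  · exact ⟨⟨0, by omega⟩, by apply Fin.ext; simp [idxMap]; omega⟩
  · refine ⟨⟨2 * i.val - 1, by have := i.isLt; omega⟩, ?_⟩
    apply Fin.ext
    simp only [idxMap]
    have hlt := i.isLt
    have e1 : (2 * i.val - 1 + 1) / 2 = i.val := by omega
    rw [e1, Nat.mod_eq_of_lt hlt]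

theorem sup_top (n L : ℕ) [NeZero n] (j : Fin n → Fin L) (σ1 : Setoid (Fin (2 * n))) :
    Setoid.ker (j ∘ idxMap n) ⊔ (rhoPi n L j σ1 ⊔ Setoid.ker (pairMap n)) = ⊤ := by
  have hn : 0 < n := Nat.pos_of_ne_zero (NeZero.ne n)
  set S := Setoid.ker (j ∘ idxMap n) ⊔ (rhoPi n L j σ1 ⊔ Setoid.ker (pairMap n)) with hS
  have hadj : ∀ a b : Fin (2 * n),
      (pairMap n a = pairMap n b ∨ idxMap n a = idxMap n b) → S a b := by
    intro a b hab
    rcases hab with h | h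
    · exact le_sup_right (a := Setoid.ker (j ∘ idxMap n))
        (le_sup_right (a := rhoPi n L j σ1) (h : Setoid.ker (pairMap n) a b))
    · exact le_sup_left (b := rhoPi n L j σ1 ⊔ Setoid.ker (pairMap n))
        (congrArg j h : Setoid.ker (j ∘ idxMap n) a b)
  have hzero : ∀ (v : ℕ) (hv : v < 2 * n), S ⟨v, hv⟩ ⟨0, by omega⟩ := by
    intro v
    induction v using Nat.strong_induction_on with
    | _ v ih =>
      intro hv
      match v, hv with
      | 0, hv => exact S.refl _
      | (w+1), hv =>
        have step : S ⟨w + 1, hv⟩ ⟨w, by omega⟩ := by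
          apply hadj
          rcases Nat.even_or_odd (w + 1) with he | ho
          · right
            apply Fin.ext
            simp only [idxMap]
            obtain ⟨k, hk⟩ := he
            have e1 : (w + 1 + 1) / 2 = (w + 1) / 2 := by omega
            rw [e1]
          · left
            apply Fin.ext
            simp only [pairMap]
            obtain ⟨k, hk⟩ := ho
            omega
        exact S.trans step (ih w (by omega) (by omega))
  rw [eq_top_iff]
  intro a b _
  have h1 := hzero a.val a.isLt
  have h2 := hzero b.val b.isLt
  simp only [Fin.eta] at h1 h2
  exact S.trans h1 (S.symm h2)

/-- Lemma 1 (pilemma): `|π| ≤ |ρ(π)| − r(π) + 1`, where `r(π)` is the number of blocks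
of `ρ(π) ∨ [0,1]ₙ`, stated additively to avoid truncated subtraction. -/
theorem stmt0 (n L : ℕ) [NeZero n] (j : Fin n → Fin L) (σ1 : Setoid (Fin (2 * n))) :
    Nat.card (Quotient (Setoid.ker j)) +
        Nat.card (Quotient (rhoPi n L j σ1 ⊔ Setoid.ker (pairMap n))) ≤
      Nat.card (Quotient (rhoPi n L j σ1)) + 1 := by
  have hn : 0 < n := Nat.pos_of_ne_zero (NeZero.ne n)
  haveI : Nonempty (Fin (2 * n)) := ⟨⟨0, by omega⟩⟩
  have hcard : Nat.card (Quotient (Setoid.ker j)) =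
      Nat.card (Quotient (Setoid.ker (j ∘ idxMap n))) := by
    rw [Nat.card_congr (Setoid.quotientKerEquivRange j),
      Nat.card_congr (Setoid.quotientKerEquivRange (j ∘ idxMap n)),
      Set.range_comp, (idxMap_surjective n).range_eq, Set.image_univ]
  rw [hcard]
  apply key (rhoPi n L j σ1) (Setoid.ker (j ∘ idxMap n))
    (rhoPi n L j σ1 ⊔ Setoid.ker (pairMap n))
  · exact fun a b h => (h.1 : j (idxMap n a) = j (idxMap n b))
  · exact le_sup_left
  · exact sup_top n L j σ1
end

section
/- Every noncrossing partition of {1,...,n} (with n ≥ 1, considered cyclically) can be reduced to the empty partition by repeatedly removing singleton blocks and removing one of any two cyclically successive elements lying in the same block. Equivalently: the standard form (as an alternating partition) of any noncrossing partition is the empty partition. -/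
/-- The cyclic successor of `a` in the finite ground set `S`: the least element of `S`
greater than `a`, wrapping around to the minimum of `S`. -/
def cyclSucc (S : Finset ℕ) (a : ℕ) : ℕ :=
  if h : (S.filter (fun b => a < b)).Nonempty then (S.filter (fun b => a < b)).min' h
  else if h2 : S.Nonempty then S.min' h2 else 0

/-- One reduction step on a partition (a finite set of blocks): remove a singleton block,
or remove one of two cyclically successive elements lying in the same block. -/
inductive ReduceStep : Finset (Finset ℕ) → Finset (Finset ℕ) → Prop
  | singleton (P : Finset (Finset ℕ)) (a : ℕ) (h : {a} ∈ P) :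
      ReduceStep P (P.erase {a})
  | adjacent (P : Finset (Finset ℕ)) (B : Finset ℕ) (a b : ℕ)
      (hB : B ∈ P) (ha : a ∈ B) (hb : b ∈ B) (hab : a ≠ b)
      (hsucc : b = cyclSucc (P.sup id) a) :
      ReduceStep P (insert (B.erase b) (P.erase B))

lemma mem_sup_iff' (P : Finset (Finset ℕ)) (x : ℕ) :
    x ∈ P.sup id ↔ ∃ B ∈ P, x ∈ B := by
  simp [Finset.mem_sup]

lemma reduce_aux : ∀ N : ℕ, ∀ P : Finset (Finset ℕ),
    (P.sup id).card ≤ N →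
    (∀ B ∈ P, B.Nonempty) →
    (∀ B ∈ P, ∀ B' ∈ P, B ≠ B' → Disjoint B B') →
    (¬ ∃ a b c d : ℕ, ∃ B B' : Finset ℕ,
      a < b ∧ b < c ∧ c < d ∧ B ∈ P ∧ B' ∈ P ∧ B ≠ B' ∧
      a ∈ B ∧ c ∈ B ∧ b ∈ B' ∧ d ∈ B') →
    Relation.ReflTransGen ReduceStep P ∅ := by
  intro N
  induction N with
  | zero =>
    intro P hcard hne _ _
    have hP : P = ∅ := by
      by_contra h
      obtain ⟨B, hB⟩ := Finset.nonempty_iff_ne_empty.mpr h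
      obtain ⟨x, hx⟩ := hne B hB
      have : x ∈ P.sup id := (mem_sup_iff' P x).mpr ⟨B, hB, hx⟩
      have := Finset.card_pos.mpr ⟨x, this⟩
      omega
    rw [hP]
  | succ N ih =>
    intro P hcard hne hdisj hnc
    classical
    by_cases hP : P = ∅
    · rw [hP]
    set S := P.sup id with hS
    have hPne : P.Nonempty := Finset.nonempty_iff_ne_empty.mpr hP
    -- find a block minimizing the cardinality of its convex hull within S
    obtain ⟨B, hB, hmin⟩ := Finset.exists_min_image P
      (fun C => (S.filter (fun x => ∃ a ∈ C, ∃ c ∈ C, a ≤ x ∧ x ≤ c)).card) hPne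
    have hBne : B.Nonempty := hne B hB
    -- B is hull-closed
    have hcl : ∀ x ∈ S, ∀ a ∈ B, ∀ c ∈ B, a ≤ x → x ≤ c → x ∈ B := by
      intro x hxS a haB c hcB hax hxc
      by_contra hxB
      have hax' : a < x := lt_of_le_of_ne hax (fun h => hxB (h ▸ haB))
      have hxc' : x < c := lt_of_le_of_ne hxc (fun h => hxB (h ▸ hcB))
      obtain ⟨B', hB', hxB'⟩ := (mem_sup_iff' P x).mp hxS
      have hBB' : B ≠ B' := fun h => hxB (h ▸ hxB')
      -- every element of B' lies strictly between a and c
      have key : ∀ y ∈ B', a < y ∧ y < c := by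
        intro y hyB'
        have hdj : Disjoint B B' := hdisj B hB B' hB' hBB'
        have hya : y ≠ a := fun h => (Finset.disjoint_left.mp hdj haB) (h ▸ hyB')
        have hyc : y ≠ c := fun h => (Finset.disjoint_left.mp hdj hcB) (h ▸ hyB')
        constructor
        · by_contra h
          have hy : y < a := by omega
          exact hnc ⟨y, a, x, c, B', B, hy, hax', hxc', hB', hB, hBB'.symm,
            hyB', hxB', haB, hcB⟩
        · by_contra h
          have hy : c < y := by omega
          exact hnc ⟨a, x, c, y, B, B', hax', hxc', hy, hB, hB', hBB',
            haB, hcB, hxB', hyB'⟩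
      -- hull of B' is strictly smaller than hull of B
      have hsub : (S.filter (fun z => ∃ a' ∈ B', ∃ c' ∈ B', a' ≤ z ∧ z ≤ c')) ⊂
          (S.filter (fun z => ∃ a' ∈ B, ∃ c' ∈ B, a' ≤ z ∧ z ≤ c')) := by
        constructor
        · intro z hz
          rw [Finset.mem_filter] at hz ⊢
          obtain ⟨hzS, a', ha', c', hc', h1, h2⟩ := hz
          exact ⟨hzS, a, haB, c, hcB,
            le_of_lt (lt_of_lt_of_le (key a' ha').1 h1),
            le_of_lt (lt_of_le_of_lt h2 (key c' hc').2)⟩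
        · intro hsup
          have haS : a ∈ S := (mem_sup_iff' P a).mpr ⟨B, hB, haB⟩
          have ha1 : a ∈ S.filter (fun z => ∃ a' ∈ B, ∃ c' ∈ B, a' ≤ z ∧ z ≤ c') := by
            rw [Finset.mem_filter]
            exact ⟨haS, a, haB, c, hcB, le_refl a, le_of_lt (lt_trans hax' hxc')⟩
          have := hsup ha1
          rw [Finset.mem_filter] at this
          obtain ⟨_, a', ha', _, _, h1, _⟩ := this
          exact absurd h1 (not_le.mpr (key a' ha').1)
      have := Finset.card_lt_card hsub
      have := hmin B' hB'
      omega
    -- case split on whether B is a singleton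
    by_cases h1 : B.card = 1
    · -- singleton step
      obtain ⟨a, ha⟩ := Finset.card_eq_one.mp h1
      subst ha
      have step : ReduceStep P (P.erase {a}) := ReduceStep.singleton P a hB
      have haS : a ∈ S := (mem_sup_iff' P a).mpr ⟨{a}, hB, Finset.mem_singleton_self a⟩
      have hsup' : (P.erase {a}).sup id = S.erase a := by
        ext x
        rw [mem_sup_iff', Finset.mem_erase]
        constructor
        · rintro ⟨C, hC, hxC⟩
          rw [Finset.mem_erase] at hC
          obtain ⟨hCne, hCP⟩ := hC
          refine ⟨fun h => ?_, (mem_sup_iff' P x).mpr ⟨C, hCP, hxC⟩⟩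
          have hdj := hdisj C hCP {a} hB hCne
          exact Finset.disjoint_left.mp hdj hxC (h ▸ Finset.mem_singleton_self a)
        · rintro ⟨hxa, hxS⟩
          obtain ⟨C, hC, hxC⟩ := (mem_sup_iff' P x).mp hxS
          refine ⟨C, Finset.mem_erase.mpr ⟨fun h => ?_, hC⟩, hxC⟩
          exact hxa (Finset.mem_singleton.mp (h ▸ hxC))
      refine Relation.ReflTransGen.head step (ih (P.erase {a}) ?_ ?_ ?_ ?_)
      · rw [hsup', Finset.card_erase_of_mem haS]
        have : 1 ≤ S.card := Finset.card_pos.mpr ⟨a, haS⟩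
        omega
      · exact fun C hC => hne C (Finset.mem_of_mem_erase hC)
      · exact fun C hC C' hC' h =>
          hdisj C (Finset.mem_of_mem_erase hC) C' (Finset.mem_of_mem_erase hC') h
      · rintro ⟨a', b', c', d', C, C', h1', h2', h3', hC, hC', hCC', ha', hc', hb', hd'⟩
        exact hnc ⟨a', b', c', d', C, C', h1', h2', h3',
          Finset.mem_of_mem_erase hC, Finset.mem_of_mem_erase hC', hCC',
          ha', hc', hb', hd'⟩
    · -- adjacent step: B has at least two elements
      have h2 : 2 ≤ B.card := by
        have := Finset.card_pos.mpr hBne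
        omega
      set a := B.min' hBne with ha_def
      set m := B.max' hBne with hm_def
      have haB : a ∈ B := B.min'_mem hBne
      have hmB : m ∈ B := B.max'_mem hBne
      have ham : a < m := B.min'_lt_max'_of_card (by omega)
      have hmS : m ∈ S := (mem_sup_iff' P m).mpr ⟨B, hB, hmB⟩
      have hTne : (S.filter (fun b => a < b)).Nonempty :=
        ⟨m, Finset.mem_filter.mpr ⟨hmS, ham⟩⟩
      set b := (S.filter (fun b => a < b)).min' hTne with hb_def
      have hbT : b ∈ S.filter (fun b => a < b) := Finset.min'_mem _ hTne
      have hbS : b ∈ S := (Finset.mem_filter.mp hbT).1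
      have hab : a < b := (Finset.mem_filter.mp hbT).2
      have hbm : b ≤ m := Finset.min'_le _ m (Finset.mem_filter.mpr ⟨hmS, ham⟩)
      have hbB : b ∈ B := hcl b hbS a haB m hmB (le_of_lt hab) hbm
      have hsucc : b = cyclSucc S a := by
        rw [cyclSucc, dif_pos hTne]
      have step : ReduceStep P (insert (B.erase b) (P.erase B)) :=
        ReduceStep.adjacent P B a b hB haB hbB (ne_of_lt hab) hsucc
      set P' := insert (B.erase b) (P.erase B) with hP'_def
      have haeb : a ∈ B.erase b := Finset.mem_erase.mpr ⟨ne_of_lt hab, haB⟩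
      -- membership in new sup
      have hsup' : P'.sup id = S.erase b := by
        ext x
        rw [mem_sup_iff', Finset.mem_erase]
        constructor
        · rintro ⟨C, hC, hxC⟩
          rw [hP'_def, Finset.mem_insert] at hC
          rcases hC with hC | hC
          · subst hC
            rw [Finset.mem_erase] at hxC
            exact ⟨hxC.1, (mem_sup_iff' P x).mpr ⟨B, hB, hxC.2⟩⟩
          · rw [Finset.mem_erase] at hC
            refine ⟨fun h => ?_, (mem_sup_iff' P x).mpr ⟨C, hC.2, hxC⟩⟩
            have hdj := hdisj B hB C hC.2 (Ne.symm hC.1)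
            exact Finset.disjoint_left.mp hdj hbB (h ▸ hxC)
        · rintro ⟨hxb, hxS⟩
          obtain ⟨C, hC, hxC⟩ := (mem_sup_iff' P x).mp hxS
          by_cases hCB : C = B
          · exact ⟨B.erase b, Finset.mem_insert_self _ _,
              Finset.mem_erase.mpr ⟨hxb, hCB ▸ hxC⟩⟩
          · exact ⟨C, Finset.mem_insert_of_mem (Finset.mem_erase.mpr ⟨hCB, hC⟩), hxC⟩
      refine Relation.ReflTransGen.head step (ih P' ?_ ?_ ?_ ?_)
      · rw [hsup', Finset.card_erase_of_mem hbS]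
        have : 1 ≤ S.card := Finset.card_pos.mpr ⟨b, hbS⟩
        omega
      · intro C hC
        rw [hP'_def, Finset.mem_insert] at hC
        rcases hC with hC | hC
        · exact hC ▸ ⟨a, haeb⟩
        · exact hne C (Finset.mem_of_mem_erase hC)
      · intro C hC C' hC' hCC'
        rw [hP'_def, Finset.mem_insert] at hC hC'
        rcases hC with hC | hC <;> rcases hC' with hC' | hC'
        · exact absurd (hC.trans hC'.symm) hCC'
        · subst hC
          rw [Finset.mem_erase] at hC'
          exact Finset.disjoint_of_subset_left (Finset.erase_subset _ _)
            (hdisj B hB C' hC'.2 (Ne.symm hC'.1))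
        · subst hC'
          rw [Finset.mem_erase] at hC
          exact Finset.disjoint_of_subset_right (Finset.erase_subset _ _)
            (hdisj C hC.2 B hB hC.1)
        · exact hdisj C (Finset.mem_of_mem_erase hC) C' (Finset.mem_of_mem_erase hC') hCC'
      · rintro ⟨a', b', c', d', C, C', h1', h2', h3', hC, hC', hCC', ha', hc', hb', hd'⟩
        rw [hP'_def, Finset.mem_insert] at hC hC'
        rcases hC with hC | hC <;> rcases hC' with hC' | hC'
        · exact hCC' (hC.trans hC'.symm)
        · subst hC
          rw [Finset.mem_erase] at hC'
          exact hnc ⟨a', b', c', d', B, C', h1', h2', h3', hB, hC'.2, Ne.symm hC'.1,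
            Finset.mem_of_mem_erase ha', Finset.mem_of_mem_erase hc', hb', hd'⟩
        · subst hC'
          rw [Finset.mem_erase] at hC
          exact hnc ⟨a', b', c', d', C, B, h1', h2', h3', hC.2, hB, hC.1,
            ha', hc', Finset.mem_of_mem_erase hb', Finset.mem_of_mem_erase hd'⟩
        · rw [Finset.mem_erase] at hC hC'
          exact hnc ⟨a', b', c', d', C, C', h1', h2', h3', hC.2, hC'.2, hCC',
            ha', hc', hb', hd'⟩

/-- Every noncrossing partition of `{1,...,n}` (here `{0,...,n-1}`), `n ≥ 1`, reduces to
the empty partition by repeatedly removing singleton blocks and removing one of two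
cyclically successive elements in the same block: its standard form is empty. -/
theorem stmt2 (n : ℕ) (hn : 1 ≤ n) (P : Finset (Finset ℕ))
    (hne : ∀ B ∈ P, B.Nonempty)
    (hdisj : ∀ B ∈ P, ∀ B' ∈ P, B ≠ B' → Disjoint B B')
    (hcover : P.sup id = Finset.range n)
    (hnc : ¬ ∃ a b c d : ℕ, ∃ B B' : Finset ℕ,
      a < b ∧ b < c ∧ c < d ∧ d < n ∧ B ∈ P ∧ B' ∈ P ∧ B ≠ B' ∧
      a ∈ B ∧ c ∈ B ∧ b ∈ B' ∧ d ∈ B') :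
    Relation.ReflTransGen ReduceStep P ∅ := by
  apply reduce_aux (P.sup id).card P le_rfl hne hdisj
  rintro ⟨a, b, c, d, B, B', h1, h2, h3, hB, hB', hBB', ha, hc, hb, hd⟩
  have hdS : d ∈ P.sup id := (mem_sup_iff' P d).mpr ⟨B', hB', hd⟩
  rw [hcover, Finset.mem_range] at hdS
  exact hnc ⟨a, b, c, d, B, B', h1, h2, h3, hdS, hB, hB', hBB', ha, hc, hb, hd⟩
end

section
/- Let A be an n×m real matrix and b ∈ ℝⁿ, and suppose the first variable x₁ appears with coefficients in {−1,0,1}. Partition the inequalities Ax ≤ b into those of the form x₁ + B_i·y ≤ e_i (i=1..r₁), C_i·y ≤ f_i (i=1..r₂), and −x₁ + D_i·y ≤ g_i (i=1..r₃), where y = (x₂,...,x_m). Then there exists x₁ with (x₁,y) satisfying all inequalities if and only if y satisfies: C_i·y ≤ f_i for all i, and D_i·y + B_k·y ≤ g_i + e_k for all i,k (Fourier–Motzkin elimination correctness). -/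
/-- Fourier–Motzkin elimination correctness: with the inequalities partitioned into
`x₁ + Bᵢ·y ≤ eᵢ`, `Cᵢ·y ≤ fᵢ`, `−x₁ + Dᵢ·y ≤ gᵢ`, a feasible `x₁` exists iff the
`x₁`-free constraints hold and `Dᵢ·y + B_k·y ≤ gᵢ + e_k` for all `i, k`. -/
theorem stmt19 (m r1 r2 r3 : ℕ)
    (B : Fin r1 → Fin m → ℝ) (e : Fin r1 → ℝ)
    (C : Fin r2 → Fin m → ℝ) (f : Fin r2 → ℝ)
    (D : Fin r3 → Fin m → ℝ) (g : Fin r3 → ℝ) (y : Fin m → ℝ) :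
    (∃ x1 : ℝ,
      (∀ i, x1 + ∑ j, B i j * y j ≤ e i) ∧
      (∀ i, (∑ j, C i j * y j) ≤ f i) ∧
      (∀ i, -x1 + ∑ j, D i j * y j ≤ g i)) ↔
    ((∀ i, (∑ j, C i j * y j) ≤ f i) ∧
      ∀ i k, (∑ j, D i j * y j) + (∑ j, B k j * y j) ≤ g i + e k) := by
  constructor
  · rintro ⟨x1, h1, h2, h3⟩
    refine ⟨h2, fun i k => ?_⟩
    have := h1 k
    have := h3 i
    linarith
  · rintro ⟨h2, h13⟩
    rcases Nat.eq_zero_or_pos r1 with hr1 | hr1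
    · rcases Nat.eq_zero_or_pos r3 with hr3 | hr3
      · exact ⟨0, fun i => absurd i.2 (by omega), h2, fun i => absurd i.2 (by omega)⟩
      · haveI : Nonempty (Fin r3) := ⟨⟨0, hr3⟩⟩
        refine ⟨Finset.univ.sup' Finset.univ_nonempty
          (fun i => (∑ j, D i j * y j) - g i), fun i => absurd i.2 (by omega), h2, fun i => ?_⟩
        have := Finset.le_sup' (f := fun i => (∑ j, D i j * y j) - g i) (Finset.mem_univ i)
        linarith
    · haveI : Nonempty (Fin r1) := ⟨⟨0, hr1⟩⟩
      refine ⟨Finset.univ.inf' Finset.univ_nonempty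
        (fun k => e k - ∑ j, B k j * y j), fun k => ?_, h2, fun i => ?_⟩
      · have := Finset.inf'_le (f := fun k => e k - ∑ j, B k j * y j) (Finset.mem_univ k)
        linarith
      · have : (∑ j, D i j * y j) - g i ≤ Finset.univ.inf' Finset.univ_nonempty
            (fun k => e k - ∑ j, B k j * y j) := by
          apply Finset.le_inf'
          intro k _
          have := h13 i k
          linarith
        linarith
end
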